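/- Let G be a group with finite presentation ⟨A | R⟩ and let X = Cay(G,A). For every K ≥ 1 there exists L = L(K) ≥ 1 with the following property: if w is a word of length n over A representing the identity of G, whose associated edge-loop in X traces out a K-biLipschitz embedded cyclic subgraph of X of length n, then Area(w) ≥ n²/L. -/

import Mathlib

open SimpleGraph

/-- The Cayley graph of a group `G` with respect to a (symmetric) set `A` of generators:
`x` and `y` are adjacent iff they differ by right multiplication by an element of `A`. -/
def cayleyGraph (G : Type*) [Group G] (A : Set G) : SimpleGraph G where
  Adj x y := x ≠ y ∧ (x⁻¹ * y ∈ A ∨ y⁻¹ * x ∈ A)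
  symm := ⟨fun x y h => ⟨h.1.symm, h.2.symm⟩⟩
  loopless := ⟨fun x h => h.1 rfl⟩

/-- `S` is a cut set of the (finite) subgraph `H` of `X`: removing `S` from `H` leaves no
connected component with more than half of the vertices of `H`. -/
def IsCutSet {V : Type*} (X : SimpleGraph V) (H : X.Subgraph) (S : Set V) : Prop :=
  S ⊆ H.verts ∧
  ∀ C : ((H.deleteVerts S).coe).ConnectedComponent, 2 * C.supp.ncard ≤ H.verts.ncard

/-- The cut-size of a subgraph: the minimal cardinality of a cut set. -/
noncomputable def cutSize {V : Type*} (X : SimpleGraph V) (H : X.Subgraph) : ℕ :=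
  sInf {k | ∃ S : Set V, IsCutSet X H S ∧ S.ncard = k}

/-- The separation profile of a graph `X`:
`sep_X(n)` is the largest cut-size of a finite subgraph of `X` with at most `n` vertices. -/
noncomputable def sepProfile {V : Type*} (X : SimpleGraph V) (n : ℕ) : ℕ :=
  sSup {k | ∃ H : X.Subgraph, H.verts.Finite ∧ H.verts.ncard ≤ n ∧ cutSize X H = k}

/-- `f ≲ g`: there is `C > 0` with `f n ≤ C * g (C * n + C) + C` for all `n`. -/
def GrowsLE (f g : ℕ → ℕ) : Prop :=
  ∃ C : ℕ, 0 < C ∧ ∀ n, f n ≤ C * g (C * n + C) + C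

/-- A group is virtually free if it has a free subgroup of finite index. -/
def IsVirtuallyFree (G : Type*) [Group G] : Prop :=
  ∃ H : Subgroup G, H.FiniteIndex ∧ ∃ ι : Type, Nonempty (FreeGroup ι ≃* H)

/-- A group is finitely presented if it is isomorphic to a group presented by finitely many
generators and finitely many relators. -/
def IsFinitelyPresentedGroup (G : Type*) [Group G] : Prop :=
  ∃ (n : ℕ) (R : Set (FreeGroup (Fin n))), R.Finite ∧ Nonempty (PresentedGroup R ≃* G)

/-- The inverse growth function of a graph based at `v`:
`κ(n)` is the largest radius `r` such that the ball of radius `r` about `v` has at most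
`n` vertices. -/
noncomputable def invGrowth {V : Type*} (X : SimpleGraph V) (v : V) (n : ℕ) : ℕ :=
  sSup {r : ℕ | {u | X.dist v u ≤ r}.Finite ∧ {u | X.dist v u ≤ r}.ncard ≤ n}

/-- The ball of radius `r` about `v`, regarded as an induced (finite) subgraph of `X`. -/
def ballSubgraph {V : Type*} (X : SimpleGraph V) (v : V) (r : ℕ) : X.Subgraph :=
  (⊤ : X.Subgraph).induce {u | X.dist v u ≤ r}

/-- A graph is one-ended if removing any finite set of vertices leaves exactly one
infinite connected component. -/
def OneEnded {V : Type*} (X : SimpleGraph V) : Prop :=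
  ∀ F : Set V, F.Finite →
    ∃! C : (SimpleGraph.induce (Fᶜ : Set V) X).ConnectedComponent, C.supp.Infinite

/-- Gromov hyperbolicity of a graph, via the four-point condition on the graph metric. -/
def GromovHyperbolic {V : Type*} (X : SimpleGraph V) : Prop :=
  ∃ δ : ℝ, 0 ≤ δ ∧ ∀ w x y z : V,
    (X.dist w x : ℝ) + (X.dist y z : ℝ) ≤
      max ((X.dist w y : ℝ) + (X.dist x z : ℝ)) ((X.dist w z : ℝ) + (X.dist x y : ℝ)) + δ

/-- Distance from a vertex to a set of vertices, in the graph metric. -/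
noncomputable def distToSet {V : Type*} (X : SimpleGraph V) (x : V) (T : Set V) : ℕ :=
  sInf {d | ∃ t ∈ T, X.dist x t = d}

/-- Diameter of a set of vertices in the graph metric. -/
noncomputable def gdiam {V : Type*} (X : SimpleGraph V) (T : Set V) : ℕ :=
  sSup {d | ∃ x ∈ T, ∃ y ∈ T, X.dist x y = d}

/-- Distance between `i` and `j` around the cyclic graph on `ZMod n`. -/
noncomputable def cycleDist (n : ℕ) (i j : ZMod n) : ℕ :=
  sInf {k : ℕ | i + (k : ZMod n) = j ∨ j + (k : ZMod n) = i}

/-- A `K`-biLipschitz embedded cyclic subgraph of length `n` in `X`, given by an injective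
map from the cycle `ZMod n` sending consecutive elements to adjacent vertices, such that
the distance along the cycle is at most `K` times the distance in `X`. -/
def IsBiLipEmbeddedCycle {V : Type*} (X : SimpleGraph V) (K : ℝ) (n : ℕ) (c : ZMod n → V) :
    Prop :=
  3 ≤ n ∧ Function.Injective c ∧ (∀ i, X.Adj (c i) (c (i + 1))) ∧
  ∀ i j, (cycleDist n i j : ℝ) ≤ K * (X.dist (c i) (c j) : ℝ)

/-- The combinatorial area of `w`: the least `N` such that `w` is a product (in the free
group) of `N` conjugates of relators in `R` or their inverses. -/
noncomputable def area {α : Type*} (R : Set (FreeGroup α)) (w : FreeGroup α) : ℕ :=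
  sInf {N | ∃ f : Fin N → FreeGroup α,
    (∀ i, ∃ g r, r ∈ R ∧ (f i = g * r * g⁻¹ ∨ f i = g * r⁻¹ * g⁻¹)) ∧
    (List.ofFn f).prod = w}

/-- The Dehn function of the presentation with relator set `R`: the maximal area of a
word of length at most `n` representing the identity. -/
noncomputable def dehnFunction {α : Type*} [DecidableEq α] (R : Set (FreeGroup α)) (n : ℕ) :
    ℕ :=
  sSup {a | ∃ w : FreeGroup α, FreeGroup.norm w ≤ n ∧
    w ∈ Subgroup.normalClosure R ∧ area R w = a}

/-- Quasi-isometry between two graphs, with respect to their graph metrics. -/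
def QuasiIsometricGraphs {V W : Type*} (X : SimpleGraph V) (Y : SimpleGraph W) : Prop :=
  ∃ (f : V → W) (L C : ℝ), 1 ≤ L ∧ 0 ≤ C ∧
    (∀ x x', (Y.dist (f x) (f x') : ℝ) ≤ L * (X.dist x x' : ℝ) + C) ∧
    (∀ x x', L⁻¹ * (X.dist x x' : ℝ) - C ≤ (Y.dist (f x) (f x') : ℝ)) ∧
    (∀ y, ∃ x, (Y.dist y (f x) : ℝ) ≤ C)

/-- A graph is vertex-transitive if its automorphism group acts transitively on vertices. -/
def VertexTransitive {V : Type*} (X : SimpleGraph V) : Prop :=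
  ∀ u v : V, ∃ φ : X ≃g X, φ u = v

/-- A graph has bounded degree if there is a uniform finite bound on vertex degrees. -/
def BoundedDegree {V : Type*} (X : SimpleGraph V) : Prop :=
  ∃ D : ℕ, ∀ v, (X.neighborSet v).Finite ∧ (X.neighborSet v).ncard ≤ D

namespace CayleyAux

open FreeGroup

variable {G : Type*} [Group G] {A : Set G}

/-- The group element corresponding to one letter of a word over `A`. -/
def stepG (A : Set G) (x : (↥A) × Bool) : G := cond x.2 (x.1 : G) (x.1 : G)⁻¹

/-- Evaluation of a word over `A` in `G`. -/
def evalL (A : Set G) (L : List ((↥A) × Bool)) : G := (L.map (stepG A)).prod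

@[simp] lemma evalL_nil : evalL A [] = 1 := rfl

@[simp] lemma evalL_cons (x : (↥A) × Bool) (L : List ((↥A) × Bool)) :
    evalL A (x :: L) = stepG A x * evalL A L := by
  simp [evalL]

lemma lift_mk (L : List ((↥A) × Bool)) :
    FreeGroup.lift (fun a : A => (a : G)) (FreeGroup.mk L) = evalL A L := by
  rw [FreeGroup.lift_mk]; rfl

lemma stepG_not (x : (↥A) × Bool) : stepG A (x.1, !x.2) = (stepG A x)⁻¹ := by
  rcases x with ⟨a, b⟩; cases b <;> simp [stepG]

noncomputable section

variable (fb gb : G → ℝ)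

/-- The discrete 1-form `f dg` evaluated on the edge `(u, v)` (symmetrized). -/
def om (u v : G) : ℝ := (fb u + fb v) / 2 * (gb v - gb u)

lemma om_def (u v : G) : om fb gb u v = (fb u + fb v) / 2 * (gb v - gb u) := rfl

/-- Line integral of the 1-form along the path traced by a word, starting at `h`. -/
def lineInt : G → List ((↥A) × Bool) → ℝ
  | _, [] => 0
  | h, x :: L => om fb gb h (h * stepG A x) + lineInt (h * stepG A x) L

@[simp] lemma lineInt_nil (h : G) : lineInt fb gb h ([] : List ((↥A) × Bool)) = 0 := rfl

@[simp] lemma lineInt_cons (h : G) (x : (↥A) × Bool) (L : List ((↥A) × Bool)) :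
    lineInt fb gb h (x :: L)
      = om fb gb h (h * stepG A x) + lineInt fb gb (h * stepG A x) L := rfl

lemma lineInt_append (L₁ L₂ : List ((↥A) × Bool)) (h : G) :
    lineInt fb gb h (L₁ ++ L₂)
      = lineInt fb gb h L₁ + lineInt fb gb (h * evalL A L₁) L₂ := by
  induction L₁ generalizing h with
  | nil => simp
  | cons x L ih => simp [ih, mul_assoc, add_assoc]

lemma lineInt_step {L₁ L₂ : List ((↥A) × Bool)} (hs : FreeGroup.Red.Step L₁ L₂) (h : G) :
    lineInt fb gb h L₁ = lineInt fb gb h L₂ := by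
  induction hs with
  | @not La Lb x b =>
    rw [lineInt_append, lineInt_append]
    congr 1
    set h' := h * evalL A La with hh'
    have hinv : stepG A (x, !b) = (stepG A (x, b))⁻¹ := stepG_not (x, b)
    simp only [lineInt_cons, hinv, mul_inv_cancel_right]
    have hom : om fb gb h' (h' * stepG A (x, b)) + om fb gb (h' * stepG A (x, b)) h' = 0 := by
      unfold om; ring
    linarith [hom]

lemma lineInt_red {L₁ L₂ : List ((↥A) × Bool)} (hred : FreeGroup.Red L₁ L₂) (h : G) :
    lineInt fb gb h L₁ = lineInt fb gb h L₂ := by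
  induction hred with
  | refl => rfl
  | tail _ hs ih => rw [ih, lineInt_step fb gb hs]

variable [DecidableEq (↥A)]

/-- Line integral along the reduced word of a free group element. -/
def JInt (h : G) (w : FreeGroup ↥A) : ℝ := lineInt fb gb h w.toWord

lemma JInt_mk (h : G) (L : List ((↥A) × Bool)) :
    JInt fb gb h (FreeGroup.mk L) = lineInt fb gb h L := by
  unfold JInt; rw [FreeGroup.toWord_mk]
  exact (lineInt_red fb gb FreeGroup.reduce.red h).symm

@[simp] lemma JInt_one (h : G) : JInt fb gb h (1 : FreeGroup ↥A) = 0 := by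
  unfold JInt; rw [FreeGroup.toWord_one]; rfl

lemma JInt_mul (h : G) (u v : FreeGroup ↥A) :
    JInt fb gb h (u * v)
      = JInt fb gb h u + JInt fb gb (h * FreeGroup.lift (fun a : A => (a : G)) u) v := by
  have h1 : u * v = FreeGroup.mk (u.toWord ++ v.toWord) := by
    rw [← FreeGroup.mul_mk, FreeGroup.mk_toWord, FreeGroup.mk_toWord]
  have h2 : FreeGroup.lift (fun a : A => (a : G)) u = evalL A u.toWord := by
    conv_lhs => rw [← FreeGroup.mk_toWord (x := u)]
    exact lift_mk _
  rw [h1, JInt_mk, lineInt_append, h2]; rfl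

lemma JInt_conj (h : G) (g r : FreeGroup ↥A)
    (hr : FreeGroup.lift (fun a : A => (a : G)) r = 1) :
    JInt fb gb h (g * r * g⁻¹)
      = JInt fb gb (h * FreeGroup.lift (fun a : A => (a : G)) g) r := by
  have e0 : JInt fb gb h (g * g⁻¹) = 0 := by rw [mul_inv_cancel]; simp
  rw [JInt_mul] at e0
  have e1 : JInt fb gb h (g * r * g⁻¹)
      = JInt fb gb h g + (JInt fb gb (h * FreeGroup.lift (fun a : A => (a : G)) g) r
        + JInt fb gb (h * FreeGroup.lift (fun a : A => (a : G)) g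
            * FreeGroup.lift (fun a : A => (a : G)) r) g⁻¹) := by
    rw [mul_assoc, JInt_mul, JInt_mul]
  rw [hr, mul_one] at e1
  linarith [e0, e1]

lemma JInt_listProd (l : List (FreeGroup ↥A))
    (hl : ∀ x ∈ l, FreeGroup.lift (fun a : A => (a : G)) x = 1) :
    JInt fb gb 1 l.prod = (l.map (JInt fb gb 1)).sum := by
  induction l with
  | nil => simp
  | cons x l ih =>
    rw [List.prod_cons, JInt_mul, hl x List.mem_cons_self,
      List.map_cons, List.sum_cons, mul_one,
      ih (fun y hy => hl y (List.mem_cons_of_mem _ hy))]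

lemma path_bound (hg : ∀ (u : G) (x : (↥A) × Bool), |gb (u * stepG A x) - gb u| ≤ 1) :
    ∀ (L : List ((↥A) × Bool)) (h : G), |gb (h * evalL A L) - gb h| ≤ (L.length : ℝ) := by
  intro L
  induction L with
  | nil => simp
  | cons x L ih =>
    intro h
    have h1 := ih (h * stepG A x)
    have h2 := hg h x
    have he : h * evalL A (x :: L) = (h * stepG A x) * evalL A L := by
      simp [mul_assoc]
    rw [he]
    have h3 := abs_sub_le (gb ((h * stepG A x) * evalL A L)) (gb (h * stepG A x)) (gb h)
    rw [List.length_cons]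
    push_cast
    linarith

lemma lineInt_bnd (hf : ∀ (u : G) (x : (↥A) × Bool), |fb (u * stepG A x) - fb u| ≤ 1)
    (hg : ∀ (u : G) (x : (↥A) × Bool), |gb (u * stepG A x) - gb u| ≤ 1) :
    ∀ (L : List ((↥A) × Bool)) (h : G),
      |lineInt fb gb h L - fb h * (gb (h * evalL A L) - gb h)| ≤ (L.length : ℝ) ^ 2 := by
  intro L
  induction L with
  | nil => simp
  | cons x L ih =>
    intro h
    have e : h * evalL A (x :: L) = (h * stepG A x) * evalL A L := by simp [mul_assoc]
    have key : lineInt fb gb h (x :: L) - fb h * (gb (h * evalL A (x :: L)) - gb h)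
        = (lineInt fb gb (h * stepG A x) L
            - fb (h * stepG A x) * (gb ((h * stepG A x) * evalL A L) - gb (h * stepG A x)))
          + (om fb gb h (h * stepG A x) - fb h * (gb (h * stepG A x) - gb h))
          + (fb (h * stepG A x) - fb h)
              * (gb ((h * stepG A x) * evalL A L) - gb (h * stepG A x)) := by
      rw [lineInt_cons, e]; unfold om; ring
    have b1 := ih (h * stepG A x)
    have b2 : |om fb gb h (h * stepG A x) - fb h * (gb (h * stepG A x) - gb h)| ≤ 1 / 2 := by
      have e2 : om fb gb h (h * stepG A x) - fb h * (gb (h * stepG A x) - gb h)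
          = (fb (h * stepG A x) - fb h) / 2 * (gb (h * stepG A x) - gb h) := by
        unfold om; ring
      rw [e2, abs_mul, abs_div]
      have hfx := hf h x
      have hgx := hg h x
      have h1 : |fb (h * stepG A x) - fb h| / |(2 : ℝ)| ≤ 1 / 2 := by
        rw [abs_two]
        linarith
      have h2 : (0:ℝ) ≤ |fb (h * stepG A x) - fb h| / |(2 : ℝ)| := by positivity
      nlinarith [abs_nonneg (gb (h * stepG A x) - gb h)]
    have b3 : |(fb (h * stepG A x) - fb h)
        * (gb ((h * stepG A x) * evalL A L) - gb (h * stepG A x))| ≤ (L.length : ℝ) := by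
      rw [abs_mul]
      have hfx := hf h x
      have hp := path_bound gb hg L (h * stepG A x)
      nlinarith [abs_nonneg (fb (h * stepG A x) - fb h),
        abs_nonneg (gb ((h * stepG A x) * evalL A L) - gb (h * stepG A x))]
    rw [key]
    have habs := abs_add_le ((lineInt fb gb (h * stepG A x) L
            - fb (h * stepG A x) * (gb ((h * stepG A x) * evalL A L) - gb (h * stepG A x)))
          + (om fb gb h (h * stepG A x) - fb h * (gb (h * stepG A x) - gb h)))
          ((fb (h * stepG A x) - fb h)
              * (gb ((h * stepG A x) * evalL A L) - gb (h * stepG A x)))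
    have habs2 := abs_add_le (lineInt fb gb (h * stepG A x) L
            - fb (h * stepG A x) * (gb ((h * stepG A x) * evalL A L) - gb (h * stepG A x)))
          (om fb gb h (h * stepG A x) - fb h * (gb (h * stepG A x) - gb h))
    rw [List.length_cons]
    push_cast
    have hL0 : (0:ℝ) ≤ (L.length : ℝ) := Nat.cast_nonneg _
    nlinarith [habs, habs2, b1, b2, b3]

lemma lineInt_loop (hf : ∀ (u : G) (x : (↥A) × Bool), |fb (u * stepG A x) - fb u| ≤ 1)
    (hg : ∀ (u : G) (x : (↥A) × Bool), |gb (u * stepG A x) - gb u| ≤ 1)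
    (L : List ((↥A) × Bool)) (h : G) (hL : evalL A L = 1) :
    |lineInt fb gb h L| ≤ (L.length : ℝ) ^ 2 := by
  have hb := lineInt_bnd fb gb hf hg L h
  rw [hL, mul_one, sub_self, mul_zero, sub_zero] at hb
  exact hb

lemma lineInt_eq_sum (L : List ((↥A) × Bool)) (h : G) :
    lineInt fb gb h L = ∑ j ∈ Finset.range L.length,
      om fb gb (h * evalL A (L.take j)) (h * evalL A (L.take (j + 1))) := by
  induction L generalizing h with
  | nil => simp
  | cons x L ih =>
    rw [lineInt_cons, ih (h * stepG A x), List.length_cons, Finset.sum_range_succ',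
      add_comm (om fb gb h (h * stepG A x)) _]
    congr 1
    · refine Finset.sum_congr rfl fun j _ => ?_
      simp [List.take_succ_cons, mul_assoc]
    · simp [List.take_succ_cons, mul_assoc]

end

section Connectivity

/-- Left translation as an automorphism of the Cayley graph. -/
def mulLeftIso (g : G) : cayleyGraph G A ≃g cayleyGraph G A where
  toEquiv := Equiv.mulLeft g
  map_rel_iff' := by
    intro x y
    show (cayleyGraph G A).Adj (g * x) (g * y) ↔ (cayleyGraph G A).Adj x y
    have e1 : (g * x)⁻¹ * (g * y) = x⁻¹ * y := by group
    have e2 : (g * y)⁻¹ * (g * x) = y⁻¹ * x := by group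
    unfold cayleyGraph
    simp only [ne_eq, mul_right_inj, e1, e2]

lemma cayley_connected (hAgen : Subgroup.closure A = ⊤) : (cayleyGraph G A).Connected := by
  have htrans : ∀ (g x y : G), (cayleyGraph G A).Reachable x y →
      (cayleyGraph G A).Reachable (g * x) (g * y) := by
    intro g x y hr
    have := hr.map (mulLeftIso (A := A) g).toHom
    simpa [mulLeftIso] using this
  have hsub : ∀ g : G, (cayleyGraph G A).Reachable 1 g := by
    intro g
    have hg : g ∈ Subgroup.closure A := by rw [hAgen]; trivial
    induction hg using Subgroup.closure_induction with
    | mem x hx =>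
      by_cases h1 : (1 : G) = x
      · rw [← h1]
      · exact SimpleGraph.Adj.reachable ⟨h1, Or.inl (by simpa using hx)⟩
    | one => exact SimpleGraph.Reachable.refl 1
    | mul x y hx hy ihx ihy =>
      refine ihx.trans ?_
      have := htrans x 1 y ihy
      simpa using this
    | inv x hx ihx =>
      have := htrans x⁻¹ 1 x ihx
      simp only [mul_one, inv_mul_cancel] at this
      exact this.symm
  have : Nonempty G := ⟨1⟩
  exact SimpleGraph.Connected.mk (fun u v => (hsub u).symm.trans (hsub v))

lemma dist_step (u : G) (x : (↥A) × Bool) :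
    (cayleyGraph G A).dist u (u * stepG A x) ≤ 1 := by
  by_cases h : u = u * stepG A x
  · rw [← h, SimpleGraph.dist_self]; omega
  · have hadj : (cayleyGraph G A).Adj u (u * stepG A x) := by
      refine ⟨h, ?_⟩
      rcases x with ⟨a, b⟩
      cases b
      · right
        have e : (u * stepG A (a, false))⁻¹ * u = (a : G) := by
          simp only [stepG, cond]; group
        rw [e]; exact a.2
      · left
        have e : u⁻¹ * (u * stepG A (a, true)) = (a : G) := by
          simp only [stepG, cond]; group
        rw [e]; exact a.2
    have := SimpleGraph.dist_le hadj.toWalk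
    simpa using this

/-- Distance from a point to a set of vertices, as a natural number. -/
noncomputable def distSet (A : Set G) (P : Set G) (v : G) : ℕ :=
  sInf {k | ∃ p ∈ P, (cayleyGraph G A).dist v p = k}

lemma distSet_le {P : Set G} {p : G} (hp : p ∈ P) (v : G) :
    distSet A P v ≤ (cayleyGraph G A).dist v p :=
  Nat.sInf_le ⟨p, hp, rfl⟩

lemma distSet_mem {P : Set G} (hP : P.Nonempty) (v : G) :
    ∃ p ∈ P, (cayleyGraph G A).dist v p = distSet A P v := by
  obtain ⟨p, hp⟩ := hP
  exact Nat.sInf_mem (s := {k | ∃ p ∈ P, (cayleyGraph G A).dist v p = k})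
    ⟨(cayleyGraph G A).dist v p, p, hp, rfl⟩

lemma trunc_lip (hconn : (cayleyGraph G A).Connected) {P : Set G} (hP : P.Nonempty)
    (d : ℕ) (v : G) (x : (↥A) × Bool) :
    |((min d (distSet A P (v * stepG A x)) : ℕ) : ℝ) - ((min d (distSet A P v) : ℕ) : ℝ)| ≤ 1 := by
  have hd1 : (cayleyGraph G A).dist v (v * stepG A x) ≤ 1 := dist_step v x
  have hd1' : (cayleyGraph G A).dist (v * stepG A x) v ≤ 1 := by
    rw [SimpleGraph.dist_comm]; exact hd1
  have h1 : distSet A P (v * stepG A x) ≤ distSet A P v + 1 := by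
    obtain ⟨p, hp, he⟩ := distSet_mem (A := A) hP v
    refine le_trans (distSet_le hp (v * stepG A x)) ?_
    have := hconn.dist_triangle (u := v * stepG A x) (v := v) (w := p)
    omega
  have h2 : distSet A P v ≤ distSet A P (v * stepG A x) + 1 := by
    obtain ⟨p, hp, he⟩ := distSet_mem (A := A) hP (v * stepG A x)
    refine le_trans (distSet_le hp v) ?_
    have := hconn.dist_triangle (u := v) (v := v * stepG A x) (w := p)
    omega
  have ha : min d (distSet A P (v * stepG A x)) ≤ min d (distSet A P v) + 1 := by omega
  have hb : min d (distSet A P v) ≤ min d (distSet A P (v * stepG A x)) + 1 := by omega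
  rw [abs_le]
  constructor
  · have := (Nat.cast_le (α := ℝ)).mpr hb
    push_cast at this ⊢
    linarith
  · have := (Nat.cast_le (α := ℝ)).mpr ha
    push_cast at this ⊢
    linarith

end Connectivity

lemma cycleDist_lower {n i j m : ℕ} (hj : j < n) (hij : i ≤ j)
    (h1 : m ≤ j - i) (h2 : j - i ≤ n - m) :
    m ≤ cycleDist n (i : ZMod n) (j : ZMod n) := by
  rcases Nat.eq_zero_or_pos m with rfl | hm
  · exact Nat.zero_le _
  have e : ((i : ZMod n)) + ((j - i : ℕ) : ZMod n) = (j : ZMod n) := by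
    rw [← Nat.cast_add, Nat.add_sub_cancel' hij]
  apply le_csInf
  · exact ⟨j - i, Or.inl e⟩
  · rintro k (hk | hk)
    · have hkz : (k : ZMod n) = ((j - i : ℕ) : ZMod n) := add_left_cancel (hk.trans e.symm)
      have hmod : k % n = (j - i) % n := (ZMod.natCast_eq_natCast_iff _ _ _).mp hkz
      have hlt : j - i < n := lt_of_le_of_lt (Nat.sub_le _ _) hj
      calc m ≤ j - i := h1
        _ = (j - i) % n := (Nat.mod_eq_of_lt hlt).symm
        _ = k % n := hmod.symm
        _ ≤ k := Nat.mod_le _ _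
    · have e' : ((j : ZMod n)) + ((n - (j - i) : ℕ) : ZMod n) = (i : ZMod n) := by
        have hnn : (j + (n - (j - i)) : ℕ) = n + i := by omega
        rw [← Nat.cast_add, hnn, Nat.cast_add, ZMod.natCast_self, zero_add]
      have hkz : (k : ZMod n) = ((n - (j - i) : ℕ) : ZMod n) := add_left_cancel (hk.trans e'.symm)
      have hmod : k % n = (n - (j - i)) % n := (ZMod.natCast_eq_natCast_iff _ _ _).mp hkz
      have hlt : n - (j - i) < n := by omega
      calc m ≤ n - (j - i) := by omega
        _ = (n - (j - i)) % n := (Nat.mod_eq_of_lt hlt).symm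
        _ = k % n := hmod.symm
        _ ≤ k := Nat.mod_le _ _

lemma exists_conj_list {H : Type*} [Group H] (R : Set H) {w : H}
    (hw : w ∈ Subgroup.normalClosure R) :
    ∃ l : List H, (∀ x ∈ l, ∃ g r, r ∈ R ∧ (x = g * r * g⁻¹ ∨ x = g * r⁻¹ * g⁻¹))
      ∧ l.prod = w := by
  have hw' : w ∈ Subgroup.closure (Group.conjugatesOfSet R) := hw
  clear hw
  induction hw' using Subgroup.closure_induction with
  | mem x hx =>
    obtain ⟨r, hr, hc⟩ := Group.mem_conjugatesOfSet_iff.mp hx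
    obtain ⟨g, hg⟩ := isConj_iff.mp hc
    refine ⟨[x], ?_, List.prod_singleton⟩
    intro y hy
    rw [List.mem_singleton] at hy
    subst hy
    exact ⟨g, r, hr, Or.inl hg.symm⟩
  | one => exact ⟨[], by simp, List.prod_nil⟩
  | mul x y hx hy ihx ihy =>
    obtain ⟨l₁, h₁, p₁⟩ := ihx
    obtain ⟨l₂, h₂, p₂⟩ := ihy
    refine ⟨l₁ ++ l₂, ?_, by rw [List.prod_append, p₁, p₂]⟩
    intro z hz
    rcases List.mem_append.mp hz with h | h
    · exact h₁ z h
    · exact h₂ z h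
  | inv x hx ihx =>
    obtain ⟨l, hl, pl⟩ := ihx
    refine ⟨(l.map fun z => z⁻¹).reverse, ?_, by rw [← List.prod_inv_reverse, pl]⟩
    intro z hz
    rw [List.mem_reverse, List.mem_map] at hz
    obtain ⟨y, hy, rfl⟩ := hz
    obtain ⟨g, r, hr, hc⟩ := hl y hy
    rcases hc with rfl | rfl
    · exact ⟨g, r, hr, Or.inr (by simp [mul_assoc])⟩
    · exact ⟨g, r, hr, Or.inl (by simp [mul_assoc])⟩

end CayleyAux

set_option maxHeartbeats 1000000

-- STATEMENT 12
theorem min_area_of_bilip_boundary (G : Type*) [Group G] [DecidableEq G] (A : Set G)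
    (hAfin : A.Finite) (hAsymm : ∀ a ∈ A, a⁻¹ ∈ A) (hAgen : Subgroup.closure A = ⊤)
    (R : Set (FreeGroup A)) (hRfin : R.Finite)
    (hker : Subgroup.normalClosure R = (FreeGroup.lift (fun a : A => (a : G))).ker)
    (K : ℝ) (hK : 1 ≤ K) :
    ∃ L : ℝ, 1 ≤ L ∧ ∀ (n : ℕ) (w : FreeGroup A),
      w ∈ Subgroup.normalClosure R → FreeGroup.norm w = n →
      IsBiLipEmbeddedCycle (cayleyGraph G A) K n
        (fun i : ZMod n =>
          FreeGroup.lift (fun a : A => (a : G))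
            (FreeGroup.mk ((FreeGroup.toWord w).take i.val))) →
      (n : ℝ) ^ 2 / L ≤ (area R w : ℝ) := by
  classical
  obtain ⟨M, hM1, hMb⟩ : ∃ M : ℕ, 1 ≤ M ∧ ∀ r ∈ R, FreeGroup.norm r ≤ M :=
    ⟨hRfin.toFinset.sup FreeGroup.norm + 1, Nat.le_add_left 1 _, fun r hr =>
      Nat.le_succ_of_le (Finset.le_sup (f := FreeGroup.norm) (hRfin.mem_toFinset.mpr hr))⟩
  have hK0 : (0:ℝ) < K := lt_of_lt_of_le one_pos hK
  have hM0 : (0:ℝ) < (M:ℝ) := by exact_mod_cast hM1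
  have hL0 : (0:ℝ) < 49 * K ^ 2 * (M:ℝ) ^ 2 + 36 := by positivity
  refine ⟨49 * K ^ 2 * (M:ℝ) ^ 2 + 36, by nlinarith [mul_nonneg (sq_nonneg K) (sq_nonneg ((M:ℝ)))], ?_⟩
  intro n w hw hnorm hbil
  obtain ⟨hn3, hinj, hadjc, hbilip⟩ := hbil
  have hconn : (cayleyGraph G A).Connected := CayleyAux.cayley_connected hAgen
  -- extract a representation of `w` as a product of conjugates of relators
  obtain ⟨l0, hl0, hl0prod⟩ := CayleyAux.exists_conj_list R hw
  have hNonempty : {N | ∃ f : Fin N → FreeGroup ↥A,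
      (∀ i, ∃ g r, r ∈ R ∧ (f i = g * r * g⁻¹ ∨ f i = g * r⁻¹ * g⁻¹)) ∧
      (List.ofFn f).prod = w}.Nonempty := by
    refine ⟨l0.length, fun i => l0.get i, fun i => hl0 _ (l0.get_mem i), ?_⟩
    rw [List.ofFn_get]
    exact hl0prod
  obtain ⟨fcn, hfcn, hfprod⟩ : ∃ f : Fin (area R w) → FreeGroup ↥A,
      (∀ i, ∃ g r, r ∈ R ∧ (f i = g * r * g⁻¹ ∨ f i = g * r⁻¹ * g⁻¹)) ∧
      (List.ofFn f).prod = w := Nat.sInf_mem hNonempty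
  have harea1 : 1 ≤ area R w := by
    by_contra hcon
    have h0 : area R w = 0 := by omega
    have hlen0 : (List.ofFn fcn).length = 0 := by simp [h0]
    have hnil : List.ofFn fcn = [] := List.length_eq_zero_iff.mp hlen0
    rw [hnil, List.prod_nil] at hfprod
    rw [← hfprod, FreeGroup.norm_one] at hnorm
    omega
  have hπR : ∀ r ∈ R, FreeGroup.lift (fun a : A => (a : G)) r = 1 := by
    intro r hr
    have hmem : r ∈ (FreeGroup.lift (fun a : A => (a : G))).ker := by
      rw [← hker]; exact Subgroup.subset_normalClosure hr
    exact MonoidHom.mem_ker.mp hmem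
  have hπw : FreeGroup.lift (fun a : A => (a : G)) w = 1 := by
    have hmem : w ∈ (FreeGroup.lift (fun a : A => (a : G))).ker := by
      rw [← hker]; exact hw
    exact MonoidHom.mem_ker.mp hmem
  have hn0 : (0:ℝ) ≤ (n:ℝ) := Nat.cast_nonneg _
  by_cases hn7 : n < 7
  · -- small case: use area ≥ 1
    have hn6 : (n : ℝ) ≤ 6 := by exact_mod_cast (show n ≤ 6 by omega)
    have h1 : (n:ℝ)^2 / (49 * K ^ 2 * (M:ℝ) ^ 2 + 36) ≤ 1 := by
      rw [div_le_one hL0]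
      nlinarith [mul_nonneg (sq_nonneg K) (sq_nonneg ((M:ℝ)))]
    have h2 : (1:ℝ) ≤ (area R w : ℝ) := by exact_mod_cast harea1
    linarith
  push_neg at hn7
  -- main case
  set Lw := FreeGroup.toWord w with hLw
  have hLwlen : Lw.length = n := hnorm
  set u : ℕ → G := fun j => CayleyAux.evalL A (Lw.take j) with hu
  set m := n / 4 with hm
  have hm1 : 1 ≤ m := by omega
  have h4m : 4 * m ≤ n := by omega
  have h3m : 3 * m < n := by omega
  have h7m : n ≤ 7 * m := by omega
  haveI : NeZero n := ⟨by omega⟩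
  have hu0 : u 0 = 1 := by simp [hu, CayleyAux.evalL]
  have hevalw : CayleyAux.evalL A Lw = 1 := by
    rw [← CayleyAux.lift_mk (A := A) Lw, hLw, FreeGroup.mk_toWord]
    exact hπw
  have hun : u n = 1 := by
    have ht : Lw.take n = Lw := by rw [← hLwlen]; exact List.take_length
    show CayleyAux.evalL A (Lw.take n) = 1
    rw [ht]; exact hevalw
  set d := ⌈(m:ℝ)/K⌉₊ with hd
  have hkey : ∀ i j : ℕ, j < n → i ≤ j → m ≤ j - i → j - i ≤ n - m →
      d ≤ (cayleyGraph G A).dist (u i) (u j) := by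
    intro i j hj hij h1 h2
    have hi : i < n := lt_of_le_of_lt hij hj
    have hcyc : m ≤ cycleDist n (i : ZMod n) (j : ZMod n) :=
      CayleyAux.cycleDist_lower hj hij h1 h2
    have hb := hbilip (i : ZMod n) (j : ZMod n)
    have hui : FreeGroup.lift (fun a : A => (a : G)) (FreeGroup.mk (Lw.take i)) = u i :=
      CayleyAux.lift_mk _
    have huj : FreeGroup.lift (fun a : A => (a : G)) (FreeGroup.mk (Lw.take j)) = u j :=
      CayleyAux.lift_mk _
    simp only [ZMod.val_cast_of_lt hi, ZMod.val_cast_of_lt hj, hui, huj] at hb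
    have hmK : (m : ℝ) ≤ K * ((cayleyGraph G A).dist (u i) (u j) : ℝ) :=
      le_trans (by exact_mod_cast hcyc) hb
    rw [hd]
    refine Nat.ceil_le.mpr ?_
    rw [div_le_iff₀ hK0]
    nlinarith
  set P1 : Set G := u '' (Set.Iic m) with hP1
  set P2 : Set G := u '' (Set.Icc m (2*m)) with hP2
  have hP1ne : P1.Nonempty := ⟨u 0, 0, Set.mem_Iic.mpr (Nat.zero_le m), rfl⟩
  have hP2ne : P2.Nonempty := ⟨u m, m, Set.mem_Icc.mpr ⟨le_rfl, by omega⟩, rfl⟩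
  set fb : G → ℝ := fun v => ((min d (CayleyAux.distSet A P1 v) : ℕ) : ℝ) with hfb
  set gb : G → ℝ := fun v => ((min d (CayleyAux.distSet A P2 v) : ℕ) : ℝ) with hgb
  have hflip : ∀ (v : G) (x : (↥A) × Bool), |fb (v * CayleyAux.stepG A x) - fb v| ≤ 1 :=
    fun v x => CayleyAux.trunc_lip hconn hP1ne d v x
  have hglip : ∀ (v : G) (x : (↥A) × Bool), |gb (v * CayleyAux.stepG A x) - gb v| ≤ 1 :=
    fun v x => CayleyAux.trunc_lip hconn hP2ne d v x
  have hfb0 : ∀ j, j ≤ m → fb (u j) = 0 := by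
    intro j hj
    have hle := CayleyAux.distSet_le (A := A) (P := P1)
      (show u j ∈ P1 from ⟨j, Set.mem_Iic.mpr hj, rfl⟩) (u j)
    rw [SimpleGraph.dist_self] at hle
    have h0 : CayleyAux.distSet A P1 (u j) = 0 := by omega
    simp [hfb, h0]
  have hgb0 : ∀ j, m ≤ j → j ≤ 2*m → gb (u j) = 0 := by
    intro j hj hj2
    have hle := CayleyAux.distSet_le (A := A) (P := P2)
      (show u j ∈ P2 from ⟨j, Set.mem_Icc.mpr ⟨hj, hj2⟩, rfl⟩) (u j)
    rw [SimpleGraph.dist_self] at hle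
    have h0 : CayleyAux.distSet A P2 (u j) = 0 := by omega
    simp [hgb, h0]
  have hfbd : ∀ j, 2*m ≤ j → j ≤ 3*m → fb (u j) = d := by
    intro j h2j h3j
    obtain ⟨p, hp, he⟩ := CayleyAux.distSet_mem (A := A) hP1ne (u j)
    obtain ⟨i, hi, rfl⟩ := hp
    rw [Set.mem_Iic] at hi
    have hdle : d ≤ CayleyAux.distSet A P1 (u j) := by
      rw [← he, SimpleGraph.dist_comm]
      exact hkey i j (by omega) (by omega) (by omega) (by omega)
    simp [hfb, hdle]
  have hgbd : ∀ j, 3*m ≤ j → j ≤ n → gb (u j) = d := by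
    intro j h3j hjn
    obtain ⟨p, hp, he⟩ := CayleyAux.distSet_mem (A := A) hP2ne (u j)
    obtain ⟨i, hi, rfl⟩ := hp
    rw [Set.mem_Icc] at hi
    have hdle : d ≤ CayleyAux.distSet A P2 (u j) := by
      rw [← he]
      rcases eq_or_lt_of_le hjn with rfl | hjlt
      · rw [hun, ← hu0]
        exact hkey 0 i (by omega) (by omega) (by omega) (by omega)
      · rw [SimpleGraph.dist_comm]
        exact hkey i j (by omega) (by omega) (by omega) (by omega)
    simp [hgb, hdle]
  have hJw : CayleyAux.JInt fb gb 1 w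
      = ∑ j ∈ Finset.range n, CayleyAux.om fb gb (u j) (u (j+1)) := by
    show CayleyAux.lineInt fb gb 1 Lw = _
    rw [CayleyAux.lineInt_eq_sum, hLwlen]
    refine Finset.sum_congr rfl fun j _ => ?_
    rw [one_mul, one_mul]
  have hsum : ∑ j ∈ Finset.range n, CayleyAux.om fb gb (u j) (u (j+1)) = (d:ℝ) * d := by
    rw [Finset.range_eq_Ico,
      ← Finset.sum_Ico_consecutive (fun j => CayleyAux.om fb gb (u j) (u (j+1)))
        (show 0 ≤ 3*m by omega) (show 3*m ≤ n by omega),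
      ← Finset.sum_Ico_consecutive (fun j => CayleyAux.om fb gb (u j) (u (j+1)))
        (show 0 ≤ 2*m by omega) (show 2*m ≤ 3*m by omega),
      ← Finset.sum_Ico_consecutive (fun j => CayleyAux.om fb gb (u j) (u (j+1)))
        (show 0 ≤ m by omega) (show m ≤ 2*m by omega)]
    have p1 : ∑ j ∈ Finset.Ico 0 m, CayleyAux.om fb gb (u j) (u (j+1)) = 0 := by
      refine Finset.sum_eq_zero fun j hj => ?_
      rw [Finset.mem_Ico] at hj
      rw [CayleyAux.om_def, hfb0 j (by omega), hfb0 (j+1) (by omega)]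
      ring
    have p2 : ∑ j ∈ Finset.Ico m (2*m), CayleyAux.om fb gb (u j) (u (j+1)) = 0 := by
      refine Finset.sum_eq_zero fun j hj => ?_
      rw [Finset.mem_Ico] at hj
      rw [CayleyAux.om_def, hgb0 j (by omega) (by omega), hgb0 (j+1) (by omega) (by omega)]
      ring
    have p4 : ∑ j ∈ Finset.Ico (3*m) n, CayleyAux.om fb gb (u j) (u (j+1)) = 0 := by
      refine Finset.sum_eq_zero fun j hj => ?_
      rw [Finset.mem_Ico] at hj
      rw [CayleyAux.om_def, hgbd j (by omega) (by omega), hgbd (j+1) (by omega) (by omega)]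
      ring
    have p3 : ∑ j ∈ Finset.Ico (2*m) (3*m), CayleyAux.om fb gb (u j) (u (j+1)) = (d:ℝ) * d := by
      have he : ∀ j ∈ Finset.Ico (2*m) (3*m), CayleyAux.om fb gb (u j) (u (j+1))
          = (d:ℝ) * gb (u (j+1)) - (d:ℝ) * gb (u j) := by
        intro j hj
        rw [Finset.mem_Ico] at hj
        rw [CayleyAux.om_def, hfbd j (by omega) (by omega), hfbd (j+1) (by omega) (by omega)]
        ring
      rw [Finset.sum_congr rfl he, Finset.sum_Ico_eq_sum_range,
        show 3*m - 2*m = m by omega]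
      calc ∑ i ∈ Finset.range m,
            ((d:ℝ) * gb (u (2*m + i + 1)) - (d:ℝ) * gb (u (2*m + i)))
          = ∑ i ∈ Finset.range m, ((fun k => (d:ℝ) * gb (u (2*m + k))) (i+1)
              - (fun k => (d:ℝ) * gb (u (2*m + k))) i) := by
            refine Finset.sum_congr rfl fun i _ => ?_
            simp only [Nat.add_assoc]
        _ = (fun k => (d:ℝ) * gb (u (2*m + k))) m
              - (fun k => (d:ℝ) * gb (u (2*m + k))) 0 :=
            Finset.sum_range_sub (fun k => (d:ℝ) * gb (u (2*m + k))) m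
        _ = (d:ℝ) * d := by
            simp only []
            rw [show 2*m + m = 3*m by ring, Nat.add_zero,
              hgbd (3*m) le_rfl (by omega), hgb0 (2*m) (by omega) le_rfl]
            ring
    rw [p1, p2, p3, p4]
    ring
  have hloop : ∀ (h : G) (v : FreeGroup ↥A),
      FreeGroup.lift (fun a : A => (a : G)) v = 1 → FreeGroup.norm v ≤ M →
      |CayleyAux.JInt fb gb h v| ≤ (M:ℝ)^2 := by
    intro h v hv hnv
    have hev : CayleyAux.evalL A v.toWord = 1 := by
      rw [← CayleyAux.lift_mk (A := A) v.toWord, FreeGroup.mk_toWord]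
      exact hv
    have hb := CayleyAux.lineInt_loop fb gb hflip hglip v.toWord h hev
    refine le_trans hb ?_
    have hlen : ((v.toWord.length : ℕ) : ℝ) ≤ (M:ℝ) := by exact_mod_cast hnv
    have hlen0 : (0:ℝ) ≤ ((v.toWord.length : ℕ) : ℝ) := Nat.cast_nonneg _
    nlinarith
  have hcell : ∀ i, |CayleyAux.JInt fb gb 1 (fcn i)| ≤ (M:ℝ)^2 := by
    intro i
    obtain ⟨g, r, hrR, hca⟩ := hfcn i
    have hr1 := hπR r hrR
    rcases hca with hx | hx
    · rw [hx, CayleyAux.JInt_conj fb gb 1 g r hr1]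
      exact hloop _ r hr1 (hMb r hrR)
    · rw [hx, CayleyAux.JInt_conj fb gb 1 g r⁻¹ (by rw [map_inv, hr1, inv_one])]
      exact hloop _ r⁻¹ (by rw [map_inv, hr1, inv_one])
        (by rw [FreeGroup.norm_inv_eq]; exact hMb r hrR)
  have h1 : CayleyAux.JInt fb gb 1 w = ∑ i : Fin (area R w), CayleyAux.JInt fb gb 1 (fcn i) := by
    have hker1 : ∀ x ∈ List.ofFn fcn, FreeGroup.lift (fun a : A => (a : G)) x = 1 := by
      intro x hx
      rw [List.mem_ofFn] at hx
      obtain ⟨i, rfl⟩ := hx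
      obtain ⟨g, r, hrR, hca⟩ := hfcn i
      have hr1 := hπR r hrR
      rcases hca with hx | hx <;> rw [hx] <;> simp [map_mul, map_inv, hr1]
    have hJ := CayleyAux.JInt_listProd fb gb (List.ofFn fcn) hker1
    rw [hfprod, List.map_ofFn, List.sum_ofFn] at hJ
    rw [hJ]
    rfl
  have hbig : (d:ℝ) * (d:ℝ) ≤ (area R w : ℝ) * (M:ℝ)^2 := by
    have h2 : |CayleyAux.JInt fb gb 1 w| ≤ (area R w : ℝ) * (M:ℝ)^2 := by
      rw [h1]
      refine le_trans (Finset.abs_sum_le_sum_abs _ _) ?_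
      refine le_trans (Finset.sum_le_sum fun i _ => hcell i) ?_
      rw [Finset.sum_const, Finset.card_univ, Fintype.card_fin, nsmul_eq_mul]
    have h3 : CayleyAux.JInt fb gb 1 w = (d:ℝ) * d := by rw [hJw, hsum]
    have h4 : (0:ℝ) ≤ (d:ℝ) * d := by positivity
    calc (d:ℝ) * (d:ℝ) = |CayleyAux.JInt fb gb 1 w| := by rw [h3, abs_of_nonneg h4]
      _ ≤ _ := h2
  have hmd : (m:ℝ)/K ≤ (d:ℝ) := by rw [hd]; exact Nat.le_ceil _
  clear_value fb gb P1 P2 d u m Lw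
  have h7 : (n:ℝ) ≤ 7*(m:ℝ) := by exact_mod_cast h7m
  have hmd' : (m:ℝ) ≤ K * d := by
    rw [div_le_iff₀ hK0] at hmd
    nlinarith
  have hd0 : (0:ℝ) ≤ (d:ℝ) := Nat.cast_nonneg _
  have hn2 : (n:ℝ) ≤ 7*K*(d:ℝ) := by linarith [hmd', h7]
  have hsq : (n:ℝ)^2 ≤ 49*K^2*(d:ℝ)^2 := by
    have hself := mul_self_le_mul_self hn0 hn2
    nlinarith [hself]
  rw [div_le_iff₀ hL0]
  have harea0 : (0:ℝ) ≤ (area R w : ℝ) := Nat.cast_nonneg _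
  have hstep : 49*K^2*((d:ℝ)*(d:ℝ)) ≤ 49*K^2*((area R w : ℝ)*(M:ℝ)^2) :=
    mul_le_mul_of_nonneg_left hbig (by positivity)
  nlinarith [hsq, hstep, harea0]
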